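/- (Uniform continuity of the conjugating map via splitting) Let χ : ℝⁿ → ℝⁿ be given by χ(ξ) = −∫_ℝ G̃(t,s) f(s, x_ξ(s), x_ξ(γ(s))) ds for a fixed t, where |G̃(t,s)| ≤ Kρ* e^{-α|t-s|}, |f| ≤ μ, f is (ℓ₁,ℓ₂)-Lipschitz in the last two arguments, and |x_ξ(s) − x_{ξ'}(s)| ≤ |ξ−ξ'| e^{p₁|s−t|}, |x_ξ(γ(s)) − x_{ξ'}(γ(s))| ≤ |ξ−ξ'| e^{p₁(θ + |s−t|)} for all s. Then for every ε > 0 there exists δ > 0 (independent of t) such that |ξ − ξ'| < δ implies |χ(ξ) − χ(ξ')| < ε; in particular, choosing L ≥ (1/α) ln(8Kμρ*/(αε)) and δ = ε/(4D) with D = (Kρ* e^{p₁L}/α)(1 − e^{-αL})(ℓ₁ + ℓ₂ e^{p₁θ}) suffices. -/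

import Mathlib

/-!
Split the integral at distance `L` from `t`. On `|s - t| ≤ L` the Lipschitz bounds on `f` and on
`ξ ↦ x_ξ` give an integrand of size `‖ξ - ξ'‖ (ℓ₁ + ℓ₂ e^{p₁θ}) e^{p₁L}` times the kernel bound
`K ρ e^{-α|s - t|}`, so this part is `2 D ‖ξ - ξ'‖ < ε / 2`. On the tails only `‖f‖ ≤ μ` is used,
and the decay of the kernel makes them at most `4 K ρ μ e^{-αL} / α ≤ ε / 2` by the choice of `L`.
-/

open MeasureTheory Set Real

section ExpKernel

variable {α : ℝ}

lemma integrable_exp_neg_mul_abs (hα : 0 < α) : Integrable fun s : ℝ => exp (-α * |s|) := by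
  rw [← integrableOn_univ, ← Iic_union_Ioi (a := (0 : ℝ))]
  refine IntegrableOn.union ?_ ?_
  · refine (integrableOn_exp_mul_Iic hα 0).congr_fun (fun s hs => ?_) measurableSet_Iic
    show exp (α * s) = _
    rw [abs_of_nonpos hs]
    ring_nf
  · refine (integrableOn_exp_mul_Ioi (neg_lt_zero.2 hα) 0).congr_fun (fun s hs => ?_)
      measurableSet_Ioi
    rw [abs_of_pos hs]

lemma integral_exp_neg_mul_abs (hα : 0 < α) : ∫ s : ℝ, exp (-α * |s|) = 2 / α := by
  rw [integral_comp_abs (f := fun s => exp (-α * s)),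
    integral_exp_mul_Ioi (neg_lt_zero.2 hα), mul_zero, exp_zero]
  field_simp

lemma setIntegral_exp_neg_mul_abs_compl {L : ℝ} (hα : 0 < α) (hL : 0 ≤ L) :
    ∫ s in {s : ℝ | |s| ≤ L}ᶜ, exp (-α * |s|) = 2 * exp (-α * L) / α := by
  have hind : {s : ℝ | |s| ≤ L}ᶜ.indicator (fun s => exp (-α * |s|))
      = fun s => (Ioi L).indicator (fun r => exp (-α * r)) |s| := by
    ext s
    simp [indicator_apply, not_le]
  rw [← integral_indicator (measurableSet_le continuous_abs.measurable measurable_const).compl,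
    hind, integral_comp_abs (f := (Ioi L).indicator _), setIntegral_indicator measurableSet_Ioi,
    Ioi_inter_Ioi, max_eq_right hL, integral_exp_mul_Ioi (neg_lt_zero.2 hα)]
  field_simp

lemma setIntegral_exp_neg_mul_abs_le {L : ℝ} (hα : 0 < α) (hL : 0 ≤ L) :
    ∫ s in {s : ℝ | |s| ≤ L}, exp (-α * |s|) = 2 * (1 - exp (-α * L)) / α := by
  rw [eq_sub_of_add_eq (integral_add_compl
      (measurableSet_le continuous_abs.measurable measurable_const)
      (integrable_exp_neg_mul_abs hα)),
    integral_exp_neg_mul_abs hα, setIntegral_exp_neg_mul_abs_compl hα hL]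
  ring

end ExpKernel

lemma norm_integral_le_of_exp_decay_split {F : Type*} [NormedAddCommGroup F] [NormedSpace ℝ F]
    {h : ℝ → F} {α L A B : ℝ} (hα : 0 < α) (hL : 0 ≤ L) (hh : Integrable h)
    (hnear : ∀ s, |s| ≤ L → ‖h s‖ ≤ A * exp (-α * |s|))
    (hfar : ∀ s, L < |s| → ‖h s‖ ≤ B * exp (-α * |s|)) :
    ‖∫ s, h s‖ ≤ A * (2 * (1 - exp (-α * L)) / α) + B * (2 * exp (-α * L) / α) := by
  set S := {s : ℝ | |s| ≤ L}
  have hS : MeasurableSet S := measurableSet_le continuous_abs.measurable measurable_const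
  have hk := integrable_exp_neg_mul_abs hα
  calc ‖∫ s, h s‖ ≤ ∫ s, ‖h s‖ := norm_integral_le_integral_norm _
    _ = (∫ s in S, ‖h s‖) + ∫ s in Sᶜ, ‖h s‖ := (integral_add_compl hS hh.norm).symm
    _ ≤ (∫ s in S, A * exp (-α * |s|)) + ∫ s in Sᶜ, B * exp (-α * |s|) := add_le_add
      (setIntegral_mono_on hh.norm.integrableOn (hk.const_mul A).integrableOn hS hnear)
      (setIntegral_mono_on hh.norm.integrableOn (hk.const_mul B).integrableOn hS.compl
        fun s hs => hfar s (not_le.1 hs))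
    _ = _ := by
      rw [integral_const_mul, integral_const_mul, setIntegral_exp_neg_mul_abs_le hα hL,
        setIntegral_exp_neg_mul_abs_compl hα hL]

lemma norm_integral_le_of_exp_decay_split_at {F : Type*} [NormedAddCommGroup F]
    [NormedSpace ℝ F] {h : ℝ → F} {α L A B : ℝ} (t : ℝ) (hα : 0 < α) (hL : 0 ≤ L)
    (hh : Integrable h)
    (hnear : ∀ s, |s - t| ≤ L → ‖h s‖ ≤ A * exp (-α * |s - t|))
    (hfar : ∀ s, L < |s - t| → ‖h s‖ ≤ B * exp (-α * |s - t|)) :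
    ‖∫ s, h s‖ ≤ A * (2 * (1 - exp (-α * L)) / α) + B * (2 * exp (-α * L) / α) := by
  rw [← integral_add_right_eq_self h t]
  refine norm_integral_le_of_exp_decay_split hα hL (hh.comp_add_right t) (fun s hs => ?_)
    (fun s hs => ?_)
  · simpa using hnear (s + t) (by simpa using hs)
  · simpa using hfar (s + t) (by simpa using hs)

lemma norm_sub_le_of_delayed_lipschitz {E : Type*} [SeminormedAddCommGroup E]
    {F : E → E → E} {ℓ₁ ℓ₂ p θ r d : ℝ} {a a' b b' : E}
    (hF : ∀ a a' b b', ‖F a b - F a' b'‖ ≤ ℓ₁ * ‖a - a'‖ + ℓ₂ * ‖b - b'‖)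
    (hℓ₁ : 0 ≤ ℓ₁) (hℓ₂ : 0 ≤ ℓ₂)
    (ha : ‖a - a'‖ ≤ d * exp (p * r)) (hb : ‖b - b'‖ ≤ d * exp (p * (θ + r))) :
    ‖F a b - F a' b'‖ ≤ d * (ℓ₁ + ℓ₂ * exp (p * θ)) * exp (p * r) := by
  calc ‖F a b - F a' b'‖ ≤ ℓ₁ * (d * exp (p * r)) + ℓ₂ * (d * exp (p * (θ + r))) := by
        grw [hF, ha, hb]
    _ = _ := by rw [mul_add, exp_add]; ring

lemma exp_neg_mul_le_inv_of_log_le {α Q L : ℝ} (hα : 0 < α) (hQ : 0 < Q)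
    (hL : 1 / α * log Q ≤ L) : exp (-α * L) ≤ Q⁻¹ := by
  have hlog : log Q ≤ α * L := by
    rwa [one_div, inv_mul_le_iff₀ hα] at hL
  rw [neg_mul, exp_neg]
  exact inv_anti₀ hQ ((log_le_iff_le_exp hQ).1 hlog)

section ConjugatingMap

variable {E : Type*} [NormedAddCommGroup E] [NormedSpace ℝ E]
  {G : ℝ → ℝ → E →L[ℝ] E} {f : ℝ → E → E → E} {γ : ℝ → ℝ} {x : ℝ → E → ℝ → E}
  {K ρ α μ ℓ₁ ℓ₂ p₁ θ L ε t : ℝ} {ξ ξ' : E}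

/-- The map `χ` of the paper. -/
noncomputable def conjugatingMap (G : ℝ → ℝ → E →L[ℝ] E) (f : ℝ → E → E → E) (γ : ℝ → ℝ)
    (x : ℝ → E → ℝ → E) (t : ℝ) (ξ : E) : E :=
  -∫ s, G t s (f s (x t ξ s) (x t ξ (γ s)))

/-- The constant `D` of the paper. -/
noncomputable def splitConstant (K ρ α ℓ₁ ℓ₂ p₁ θ L : ℝ) : ℝ :=
  K * ρ * exp (p₁ * L) / α * (1 - exp (-α * L)) * (ℓ₁ + ℓ₂ * exp (p₁ * θ))

lemma splitConstant_pos_iff (hK : 0 < K) (hρ : 0 < ρ) (hα : 0 < α) (hℓ₁ : 0 < ℓ₁)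
    (hℓ₂ : 0 < ℓ₂) : 0 < splitConstant K ρ α ℓ₁ ℓ₂ p₁ θ L ↔ 0 < L := by
  have hpos : 0 < K * ρ * exp (p₁ * L) / α * (ℓ₁ + ℓ₂ * exp (p₁ * θ)) := by positivity
  rw [splitConstant, mul_right_comm, mul_pos_iff_of_pos_left hpos, sub_pos, exp_lt_one_iff,
    neg_mul, neg_lt_zero, mul_pos_iff_of_pos_left hα]

lemma norm_conjugatingMap_sub_le (hα : 0 < α) (hℓ₁ : 0 ≤ ℓ₁) (hℓ₂ : 0 ≤ ℓ₂) (hp₁ : 0 ≤ p₁)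
    (hL : 0 ≤ L) (hG : ∀ s, ‖G t s‖ ≤ K * ρ * exp (-α * |t - s|))
    (hfb : ∀ s a b, ‖f s a b‖ ≤ μ)
    (hfl : ∀ s a a' b b', ‖f s a b - f s a' b'‖ ≤ ℓ₁ * ‖a - a'‖ + ℓ₂ * ‖b - b'‖)
    (hx : ∀ s, ‖x t ξ s - x t ξ' s‖ ≤ ‖ξ - ξ'‖ * exp (p₁ * |s - t|))
    (hxγ : ∀ s, ‖x t ξ (γ s) - x t ξ' (γ s)‖ ≤ ‖ξ - ξ'‖ * exp (p₁ * (θ + |s - t|)))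
    (hint : Integrable fun s => G t s (f s (x t ξ s) (x t ξ (γ s))))
    (hint' : Integrable fun s => G t s (f s (x t ξ' s) (x t ξ' (γ s)))) :
    ‖conjugatingMap G f γ x t ξ - conjugatingMap G f γ x t ξ'‖ ≤
      K * ρ * (‖ξ - ξ'‖ * (ℓ₁ + ℓ₂ * exp (p₁ * θ)) * exp (p₁ * L)) *
          (2 * (1 - exp (-α * L)) / α) +
        K * ρ * (2 * μ) * (2 * exp (-α * L) / α) := by
  set u := fun s => f s (x t ξ s) (x t ξ (γ s))
  set v := fun s => f s (x t ξ' s) (x t ξ' (γ s))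
  have hGuv : ∀ s C, ‖u s - v s‖ ≤ C →
      ‖G t s (u s) - G t s (v s)‖ ≤ K * ρ * C * exp (-α * |s - t|) := fun s C huv => by
    rw [← map_sub, abs_sub_comm]
    exact ((G t s).le_of_opNorm_le_of_le (hG s) huv).trans_eq (by ring)
  rw [conjugatingMap, conjugatingMap, neg_sub_neg, norm_sub_rev, ← integral_sub hint hint']
  refine norm_integral_le_of_exp_decay_split_at t hα hL (hint.sub hint')
    (fun s hs => hGuv s _ ?_) (fun s _ => hGuv s _ ?_)
  · have hlip := norm_sub_le_of_delayed_lipschitz (hfl s) hℓ₁ hℓ₂ (hx s) (hxγ s)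
    refine hlip.trans (mul_le_mul_of_nonneg_left (exp_le_exp.2 ?_) ?_)
    · exact mul_le_mul_of_nonneg_left hs hp₁
    · exact mul_nonneg (norm_nonneg _) (add_nonneg hℓ₁ (mul_nonneg hℓ₂ (exp_pos _).le))
  · linarith [norm_sub_le (u s) (v s), hfb s (x t ξ s) (x t ξ (γ s)),
      hfb s (x t ξ' s) (x t ξ' (γ s))]


lemma norm_conjugatingMap_sub_lt (hK : 0 < K) (hρ : 0 < ρ) (hα : 0 < α) (hμ : 0 < μ)
    (hℓ₁ : 0 < ℓ₁) (hℓ₂ : 0 < ℓ₂) (hp₁ : 0 ≤ p₁) (hε : 0 < ε)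
    (hG : ∀ s, ‖G t s‖ ≤ K * ρ * exp (-α * |t - s|))
    (hfb : ∀ s a b, ‖f s a b‖ ≤ μ)
    (hfl : ∀ s a a' b b', ‖f s a b - f s a' b'‖ ≤ ℓ₁ * ‖a - a'‖ + ℓ₂ * ‖b - b'‖)
    (hx : ∀ s, ‖x t ξ s - x t ξ' s‖ ≤ ‖ξ - ξ'‖ * exp (p₁ * |s - t|))
    (hxγ : ∀ s, ‖x t ξ (γ s) - x t ξ' (γ s)‖ ≤ ‖ξ - ξ'‖ * exp (p₁ * (θ + |s - t|)))
    (hint : Integrable fun s => G t s (f s (x t ξ s) (x t ξ (γ s))))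
    (hint' : Integrable fun s => G t s (f s (x t ξ' s) (x t ξ' (γ s))))
    (hL : 1 / α * log (8 * K * μ * ρ / (α * ε)) ≤ L)
    (hξ : ‖ξ - ξ'‖ < ε / (4 * splitConstant K ρ α ℓ₁ ℓ₂ p₁ θ L)) :
    ‖conjugatingMap G f γ x t ξ - conjugatingMap G f γ x t ξ'‖ < ε := by
  have hD : 0 < splitConstant K ρ α ℓ₁ ℓ₂ p₁ θ L := by
    have := (div_pos_iff_of_pos_left hε).1 ((norm_nonneg _).trans_lt hξ)
    linarith
  have hL₀ := (splitConstant_pos_iff hK hρ hα hℓ₁ hℓ₂).1 hD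
  have hnear : K * ρ * (‖ξ - ξ'‖ * (ℓ₁ + ℓ₂ * exp (p₁ * θ)) * exp (p₁ * L)) *
      (2 * (1 - exp (-α * L)) / α) < ε / 2 := by
    have := (lt_div_iff₀ (by positivity)).1 hξ
    calc _ = ‖ξ - ξ'‖ * (2 * splitConstant K ρ α ℓ₁ ℓ₂ p₁ θ L) := by
          rw [splitConstant]; field_simp
      _ < ε / 2 := by linarith
  have hfar : K * ρ * (2 * μ) * (2 * exp (-α * L) / α) ≤ ε / 2 := by
    have hQ : 0 < 8 * K * μ * ρ / (α * ε) := by positivity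
    calc _ ≤ K * ρ * (2 * μ) * (2 * (8 * K * μ * ρ / (α * ε))⁻¹ / α) := by
          gcongr
          exact exp_neg_mul_le_inv_of_log_le hα hQ hL
      _ = ε / 2 := by field_simp; ring
  linarith [norm_conjugatingMap_sub_le (L := L) hα hℓ₁.le hℓ₂.le hp₁ hL₀.le hG hfb hfl hx hxγ
    hint hint']

end ConjugatingMap

theorem stmt17_general {n : ℕ}
    (G : ℝ → ℝ → ((Fin n → ℝ) →L[ℝ] (Fin n → ℝ)))
    (f : ℝ → (Fin n → ℝ) → (Fin n → ℝ) → (Fin n → ℝ))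
    (γ : ℝ → ℝ) (x : ℝ → (Fin n → ℝ) → ℝ → (Fin n → ℝ))
    (K ρ α μ ℓ₁ ℓ₂ p₁ θ : ℝ)
    (hK : 1 ≤ K) (hρ : 1 ≤ ρ) (hα : 0 < α) (hμ : 0 < μ)
    (hℓ₁ : 0 < ℓ₁) (hℓ₂ : 0 < ℓ₂) (hp₁ : 0 < p₁)
    (hG : ∀ t s : ℝ, ‖G t s‖ ≤ K * ρ * Real.exp (-α * |t - s|))
    (hfb : ∀ (s : ℝ) (a b : Fin n → ℝ), ‖f s a b‖ ≤ μ)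
    (hfl : ∀ (s : ℝ) (a a' b b' : Fin n → ℝ),
      ‖f s a b - f s a' b'‖ ≤ ℓ₁ * ‖a - a'‖ + ℓ₂ * ‖b - b'‖)
    (hx : ∀ (t : ℝ) (ξ ξ' : Fin n → ℝ) (s : ℝ),
      ‖x t ξ s - x t ξ' s‖ ≤ ‖ξ - ξ'‖ * Real.exp (p₁ * |s - t|))
    (hxγ : ∀ (t : ℝ) (ξ ξ' : Fin n → ℝ) (s : ℝ),
      ‖x t ξ (γ s) - x t ξ' (γ s)‖ ≤ ‖ξ - ξ'‖ * Real.exp (p₁ * (θ + |s - t|)))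
    (hint : ∀ (t : ℝ) (ξ : Fin n → ℝ),
      Integrable (fun s => (G t s) (f s (x t ξ s) (x t ξ (γ s)))) volume) :
    (∀ ε > (0 : ℝ), ∃ δ > (0 : ℝ), ∀ (t : ℝ) (ξ ξ' : Fin n → ℝ),
      ‖ξ - ξ'‖ < δ →
        ‖(-∫ s : ℝ, (G t s) (f s (x t ξ s) (x t ξ (γ s)))) -
          (-∫ s : ℝ, (G t s) (f s (x t ξ' s) (x t ξ' (γ s))))‖ < ε) ∧
    (∀ ε > (0 : ℝ), ∀ L : ℝ,
      (1 / α) * Real.log (8 * K * μ * ρ / (α * ε)) ≤ L →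
      ∀ (t : ℝ) (ξ ξ' : Fin n → ℝ),
        ‖ξ - ξ'‖ < ε / (4 * ((K * ρ * Real.exp (p₁ * L) / α) *
            (1 - Real.exp (-α * L)) * (ℓ₁ + ℓ₂ * Real.exp (p₁ * θ)))) →
          ‖(-∫ s : ℝ, (G t s) (f s (x t ξ s) (x t ξ (γ s)))) -
            (-∫ s : ℝ, (G t s) (f s (x t ξ' s) (x t ξ' (γ s))))‖ < ε) := by
  have hK₀ : 0 < K := zero_lt_one.trans_le hK
  have hρ₀ : 0 < ρ := zero_lt_one.trans_le hρ
  have hquant : ∀ ε > (0 : ℝ), ∀ L, 1 / α * log (8 * K * μ * ρ / (α * ε)) ≤ L → ∀ t ξ ξ',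
      ‖ξ - ξ'‖ < ε / (4 * splitConstant K ρ α ℓ₁ ℓ₂ p₁ θ L) →
        ‖conjugatingMap G f γ x t ξ - conjugatingMap G f γ x t ξ'‖ < ε :=
    fun ε hε L hL t ξ ξ' hξ => norm_conjugatingMap_sub_lt hK₀ hρ₀ hα hμ hℓ₁ hℓ₂ hp₁.le hε
      (hG t) hfb hfl (hx t ξ ξ') (hxγ t ξ ξ') (hint t ξ) (hint t ξ') hL hξ
  refine ⟨fun ε hε => ?_, hquant⟩
  set L := max 1 (1 / α * log (8 * K * μ * ρ / (α * ε)))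
  have hD : 0 < splitConstant K ρ α ℓ₁ ℓ₂ p₁ θ L :=
    (splitConstant_pos_iff hK₀ hρ₀ hα hℓ₁ hℓ₂).2 (lt_max_of_lt_left one_pos)
  exact ⟨_, div_pos hε (mul_pos four_pos hD), hquant ε hε L (le_max_right _ _)⟩

theorem stmt17 {n : ℕ}
    (G : ℝ → ℝ → ((Fin n → ℝ) →L[ℝ] (Fin n → ℝ)))
    (f : ℝ → (Fin n → ℝ) → (Fin n → ℝ) → (Fin n → ℝ))
    (γ : ℝ → ℝ) (x : ℝ → (Fin n → ℝ) → ℝ → (Fin n → ℝ))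
    (K ρ α μ ℓ₁ ℓ₂ p₁ θ : ℝ)
    (hK : 1 ≤ K) (hρ : 1 ≤ ρ) (hα : 0 < α) (hμ : 0 < μ)
    (hℓ₁ : 0 < ℓ₁) (hℓ₂ : 0 < ℓ₂) (hp₁ : 0 < p₁) (hθ : 0 < θ)
    (hG : ∀ t s : ℝ, ‖G t s‖ ≤ K * ρ * Real.exp (-α * |t - s|))
    (hfb : ∀ (s : ℝ) (a b : Fin n → ℝ), ‖f s a b‖ ≤ μ)
    (hfl : ∀ (s : ℝ) (a a' b b' : Fin n → ℝ),
      ‖f s a b - f s a' b'‖ ≤ ℓ₁ * ‖a - a'‖ + ℓ₂ * ‖b - b'‖)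
    (hx : ∀ (t : ℝ) (ξ ξ' : Fin n → ℝ) (s : ℝ),
      ‖x t ξ s - x t ξ' s‖ ≤ ‖ξ - ξ'‖ * Real.exp (p₁ * |s - t|))
    (hxγ : ∀ (t : ℝ) (ξ ξ' : Fin n → ℝ) (s : ℝ),
      ‖x t ξ (γ s) - x t ξ' (γ s)‖ ≤ ‖ξ - ξ'‖ * Real.exp (p₁ * (θ + |s - t|)))
    (hint : ∀ (t : ℝ) (ξ : Fin n → ℝ),
      Integrable (fun s => (G t s) (f s (x t ξ s) (x t ξ (γ s)))) volume) :
    (∀ ε > (0 : ℝ), ∃ δ > (0 : ℝ), ∀ (t : ℝ) (ξ ξ' : Fin n → ℝ),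
      ‖ξ - ξ'‖ < δ →
        ‖(-∫ s : ℝ, (G t s) (f s (x t ξ s) (x t ξ (γ s)))) -
          (-∫ s : ℝ, (G t s) (f s (x t ξ' s) (x t ξ' (γ s))))‖ < ε) ∧
    (∀ ε > (0 : ℝ), ∀ L : ℝ,
      (1 / α) * Real.log (8 * K * μ * ρ / (α * ε)) ≤ L →
      ∀ (t : ℝ) (ξ ξ' : Fin n → ℝ),
        ‖ξ - ξ'‖ < ε / (4 * ((K * ρ * Real.exp (p₁ * L) / α) *
            (1 - Real.exp (-α * L)) * (ℓ₁ + ℓ₂ * Real.exp (p₁ * θ)))) →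
          ‖(-∫ s : ℝ, (G t s) (f s (x t ξ s) (x t ξ (γ s)))) -
            (-∫ s : ℝ, (G t s) (f s (x t ξ' s) (x t ξ' (γ s))))‖ < ε) :=
  stmt17_general G f γ x K ρ α μ ℓ₁ ℓ₂ p₁ θ hK hρ hα hμ hℓ₁ hℓ₂ hp₁ hG hfb hfl hx hxγ hint
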